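/- Let A : {0,...,T} → ℝ≥1 be a deterministic nondecreasing process with A(0)=1, let S(u,τ) = ∏_{i=u}^{τ-1} X_i with X_i i.i.d. positive random variables satisfying E[X_1^{-s}] = V(s) < ∞ for some s > 0, and let x_1 ≥ 0 and w ≥ 0, τ = t + w. Define the departure process by D(τ) ≥ min_{0≤u≤τ} { S(u,τ) · A(u) · A^c(u) } where A^c(0)=1 and A^c(u)=e^{x_1} for u ≥ 1. Then the delay violation probability P(W(t) > w) = P(D(τ) < A(t)·e^{x_1}) satisfies P(W(t) > w) ≤ A(t)^s e^{s x_1} V(s)^τ + ∑_{u=1}^{t-1} (A(t)/A(u))^s V(s)^{τ-u}. -/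

import Mathlib

/-!
If `D(τ) < A(t) e^{x₁}`, the index `u` attaining the dynamic-server bound must satisfy `u < t`,
because `S(u, τ) ≥ 1` and `A` is nondecreasing. Hence the event is covered by the events
`S(0, τ) < A(t) e^{x₁}` and `S(u, τ) < A(t) / A(u)` for `1 ≤ u < t`, and each of these is bounded
by Markov's inequality for `S(u, τ)^{-s}`, whose mean is `V^{τ-u}`.
-/

open MeasureTheory Real

section Chernoff

variable {Ω : Type*} [MeasurableSpace Ω] {μ : Measure Ω} {f : Ω → ℝ} {s c : ℝ}

theorem integrable_rpow_neg_of_one_le [IsFiniteMeasure μ] (hf : Measurable f)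
    (hf1 : ∀ ω, 1 ≤ f ω) (hs : 0 ≤ s) : Integrable (fun ω => f ω ^ (-s)) μ :=
  Integrable.of_bound (hf.pow_const _).aestronglyMeasurable 1 <| ae_of_all _ fun ω => by
    rw [norm_of_nonneg (rpow_nonneg (zero_le_one.trans (hf1 ω)) _)]
    exact rpow_le_one_of_one_le_of_nonpos (hf1 ω) (neg_nonpos.2 hs)

theorem measureReal_lt_le_rpow_mul_integral_rpow_neg [IsFiniteMeasure μ]
    (hf : ∀ ω, 0 < f ω) (hint : Integrable (fun ω => f ω ^ (-s)) μ) (hs : 0 ≤ s) (hc : 0 < c) :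
    μ.real {ω | f ω < c} ≤ c ^ s * ∫ ω, f ω ^ (-s) ∂μ := by
  have hsub : {ω | f ω < c} ⊆ {ω | c ^ (-s) ≤ f ω ^ (-s)} := fun ω hω =>
    rpow_le_rpow_of_nonpos (hf ω) (le_of_lt hω) (neg_nonpos.2 hs)
  have markov := mul_meas_ge_le_integral_of_nonneg
    (ae_of_all _ fun ω => rpow_nonneg (hf ω).le (-s)) hint (c ^ (-s))
  calc μ.real {ω | f ω < c} = c ^ s * (c ^ (-s) * μ.real {ω | f ω < c}) := by
        rw [← mul_assoc, ← rpow_add hc, add_neg_cancel, rpow_zero, one_mul]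
    _ ≤ c ^ s * (c ^ (-s) * μ.real {ω | c ^ (-s) ≤ f ω ^ (-s)}) := by
        gcongr
        exact measure_ne_top μ _
    _ ≤ c ^ s * ∫ ω, f ω ^ (-s) ∂μ :=
        mul_le_mul_of_nonneg_left markov (rpow_nonneg hc.le s)

end Chernoff

section ServiceProcess

variable {Ω : Type*} {X : ℕ → Ω → ℝ}

def serviceProcess (X : ℕ → Ω → ℝ) (u τ : ℕ) (ω : Ω) : ℝ :=
  ∏ i ∈ Finset.Ico u τ, X i ω

theorem one_le_serviceProcess (hX1 : ∀ i ω, 1 ≤ X i ω) (u τ : ℕ) (ω : Ω) :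
    1 ≤ serviceProcess X u τ ω :=
  Finset.one_le_prod fun i _ => hX1 i ω

theorem measurable_serviceProcess [MeasurableSpace Ω] (hX : ∀ i, Measurable (X i)) (u τ : ℕ) :
    Measurable (serviceProcess X u τ) :=
  Finset.measurable_prod _ fun i _ => hX i

end ServiceProcess

theorem lt_of_dynamic_server_lt {A S : ℕ → ℝ} {u t : ℕ} {y : ℝ} (hA0 : A 0 = 1)
    (hAmono : Monotone A) (hS : 1 ≤ S u) (hy : 0 < y)
    (h : S u * A u * (if u = 0 then 1 else y) < A t * y) :
    (u = 0 ∧ S 0 < A t * y) ∨ (u ∈ Finset.Ico 1 t ∧ S u < A t / A u) := by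
  have hApos : 0 < A u := one_pos.trans_le (hA0 ▸ hAmono (Nat.zero_le u))
  rcases Nat.eq_zero_or_pos u with rfl | hu
  · left
    simpa [hA0] using h
  · right
    rw [if_neg hu.ne'] at h
    have hSA : S u * A u < A t := lt_of_mul_lt_mul_right h hy.le
    refine ⟨Finset.mem_Ico.2 ⟨hu, ?_⟩, (lt_div_iff₀ hApos).2 hSA⟩
    by_contra! htu
    have hA : A t ≤ A u := hAmono htu
    nlinarith [le_mul_of_one_le_left hApos.le hS]

theorem wtb_single_hop_general {Ω : Type*} [MeasurableSpace Ω] (μ : Measure Ω)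
    [IsProbabilityMeasure μ]
    (A : ℕ → ℝ) (hA0 : A 0 = 1) (hAmono : Monotone A)
    (X : ℕ → Ω → ℝ) (hX1 : ∀ i ω, 1 ≤ X i ω) (hXmeas : ∀ i, Measurable (X i))
    (s V : ℝ) (hs : 0 < s)
    (t w τ : ℕ) (hτ : τ = t + w)
    (hMellin : ∀ u ≤ τ, ∫ ω, (∏ i ∈ Finset.Ico u τ, X i ω) ^ (-s) ∂μ = V ^ (τ - u))
    (x₁ : ℝ)
    (D : Ω → ℝ)
    (hD : ∀ ω, ∃ u ≤ τ, (∏ i ∈ Finset.Ico u τ, X i ω) * A u *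
        (if u = 0 then 1 else Real.exp x₁) ≤ D ω) :
    (μ {ω | D ω < A t * Real.exp x₁}).toReal ≤
      A t ^ s * Real.exp (s * x₁) * V ^ τ +
        ∑ u ∈ Finset.Ico 1 t, (A t / A u) ^ s * V ^ (τ - u) := by
  have hApos (u : ℕ) : 0 < A u := one_pos.trans_le (hA0 ▸ hAmono (Nat.zero_le u))
  have hS1 := one_le_serviceProcess hX1
  have hchernoff (u : ℕ) (hu : u ≤ τ) (c : ℝ) (hc : 0 < c) :
      μ.real {ω | serviceProcess X u τ ω < c} ≤ c ^ s * V ^ (τ - u) :=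
    hMellin u hu ▸ measureReal_lt_le_rpow_mul_integral_rpow_neg
      (fun ω => one_pos.trans_le (hS1 u τ ω))
      (integrable_rpow_neg_of_one_le (measurable_serviceProcess hXmeas u τ) (hS1 u τ) hs.le)
      hs.le hc
  have hcover : {ω | D ω < A t * exp x₁} ⊆ {ω | serviceProcess X 0 τ ω < A t * exp x₁} ∪
      ⋃ u ∈ Finset.Ico 1 t, {ω | serviceProcess X u τ ω < A t / A u} := by
    intro ω hω
    obtain ⟨u, -, hle⟩ := hD ω
    rcases lt_of_dynamic_server_lt (S := fun u => serviceProcess X u τ ω) hA0 hAmono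
      (hS1 u τ ω) (exp_pos x₁) (hle.trans_lt hω) with ⟨rfl, h⟩ | ⟨hu, h⟩
    · exact Or.inl h
    · exact Or.inr (Set.mem_biUnion hu h)
  calc μ.real {ω | D ω < A t * exp x₁}
      ≤ μ.real {ω | serviceProcess X 0 τ ω < A t * exp x₁} +
          ∑ u ∈ Finset.Ico 1 t, μ.real {ω | serviceProcess X u τ ω < A t / A u} :=
        (measureReal_mono hcover).trans <| (measureReal_union_le _ _).trans <|
          add_le_add_right (measureReal_biUnion_finset_le _ _) _
    _ ≤ (A t * exp x₁) ^ s * V ^ (τ - 0) +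
          ∑ u ∈ Finset.Ico 1 t, (A t / A u) ^ s * V ^ (τ - u) := by
        gcongr with u hu
        · exact hchernoff 0 τ.zero_le _ (mul_pos (hApos t) (exp_pos x₁))
        · exact hchernoff u (by grind) _ (div_pos (hApos t) (hApos u))
    _ = A t ^ s * exp (s * x₁) * V ^ τ +
          ∑ u ∈ Finset.Ico 1 t, (A t / A u) ^ s * V ^ (τ - u) := by
        rw [Nat.sub_zero, mul_rpow (hApos t).le (exp_pos x₁).le, ← exp_mul, mul_comm x₁ s]

/-- Single-hop Wireless Transient Bound (Theorem 3): for a single wireless link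
with deterministic SNR-domain arrivals `A`, initial backlog `x₁` (modeled by the
cross-traffic `A^c(0)=1`, `A^c(u)=e^{x₁}` for `u ≥ 1`), dynamic-server
departures `D` and i.i.d. SNR-domain service increments `X` with Mellin
transform `V`,
`P(W(t) > w) = P(D(τ) < A(t)e^{x₁}) ≤ A(t)^s e^{s x₁} V^τ + ∑_{u=1}^{t-1} (A(t)/A(u))^s V^{τ-u}`. -/
theorem wtb_single_hop {Ω : Type*} [MeasurableSpace Ω] (μ : Measure Ω)
    [IsProbabilityMeasure μ]
    (A : ℕ → ℝ) (hA0 : A 0 = 1) (hAmono : Monotone A)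
    (X : ℕ → Ω → ℝ) (hX1 : ∀ i ω, 1 ≤ X i ω) (hXmeas : ∀ i, Measurable (X i))
    (s V : ℝ) (hs : 0 < s) (hV : 0 < V)
    (t w τ : ℕ) (ht : 1 ≤ t) (hτ : τ = t + w)
    (hMellin : ∀ u ≤ τ, ∫ ω, (∏ i ∈ Finset.Ico u τ, X i ω) ^ (-s) ∂μ = V ^ (τ - u))
    (x₁ : ℝ) (hx₁ : 0 ≤ x₁)
    (D : Ω → ℝ) (hDmeas : Measurable D)
    (hD : ∀ ω, ∃ u ≤ τ, (∏ i ∈ Finset.Ico u τ, X i ω) * A u *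
        (if u = 0 then 1 else Real.exp x₁) ≤ D ω) :
    (μ {ω | D ω < A t * Real.exp x₁}).toReal ≤
      A t ^ s * Real.exp (s * x₁) * V ^ τ +
        ∑ u ∈ Finset.Ico 1 t, (A t / A u) ^ s * V ^ (τ - u) :=
  wtb_single_hop_general μ A hA0 hAmono X hX1 hXmeas s V hs t w τ hτ hMellin x₁ D hD
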